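/- The Jacobi quartic identity holds: θ₃⁴(0,τ) = θ₂⁴(0,τ) + θ₀⁴(0,τ) for all τ in the upper half-plane. -/
import Mathlib


open Complex

/-- `θ₂(0,τ) = Σ_{n ∈ ℤ} q^{(n+1/2)²}`, `q = e^{2πiτ}`. -/
noncomputable def theta2 (τ : ℂ) : ℂ :=
  ∑' n : ℤ, Complex.exp (2 * Real.pi * Complex.I * τ * ((n : ℂ) + 1 / 2) ^ 2)

/-- `θ₃(0,τ) = Σ_{n ∈ ℤ} q^{n²}`. -/
noncomputable def theta3 (τ : ℂ) : ℂ :=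
  ∑' n : ℤ, Complex.exp (2 * Real.pi * Complex.I * τ * (n : ℂ) ^ 2)

/-- `θ₀(0,τ) = Σ_{n ∈ ℤ} (−1)ⁿ q^{n²}`. -/
noncomputable def theta0 (τ : ℂ) : ℂ :=
  ∑' n : ℤ, (-1) ^ n * Complex.exp (2 * Real.pi * Complex.I * τ * (n : ℂ) ^ 2)

noncomputable def th (τ c : ℂ) : ℂ := Complex.exp (2 * Real.pi * Complex.I * τ * c)

lemma th_mul (τ a b : ℂ) : th τ a * th τ b = th τ (a + b) := by
  rw [th, th, th, ← Complex.exp_add]; congr 1; ring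

lemma th_two (τ a : ℂ) : th τ (2 * a) = th (2 * τ) a := by
  unfold th; congr 1; ring

lemma theta3_eq (τ : ℂ) : theta3 τ = ∑' n : ℤ, th τ ((n : ℂ) ^ 2) := rfl
lemma theta2_eq (τ : ℂ) : theta2 τ = ∑' n : ℤ, th τ (((n : ℂ) + 1 / 2) ^ 2) := rfl
lemma theta0_eq (τ : ℂ) : theta0 τ = ∑' n : ℤ, (-1) ^ n * th τ ((n : ℂ) ^ 2) := rfl

lemma summable_norm_jt (z : ℂ) {τ : ℂ} (hτ : 0 < τ.im) :
    Summable fun n : ℤ => ‖jacobiTheta₂_term n z τ‖ := by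
  have h := summable_pow_mul_jacobiTheta₂_term_bound |z.im| hτ 0
  simp only [pow_zero, one_mul] at h
  exact Summable.of_nonneg_of_le (fun n => norm_nonneg _)
    (fun n => norm_jacobiTheta₂_term_le hτ le_rfl le_rfl n) h

lemma im_two_mul {τ : ℂ} (hτ : 0 < τ.im) : 0 < (2 * τ).im := by
  simp [Complex.mul_im]; linarith

lemma th_eq_jt3 (τ : ℂ) (n : ℤ) : th τ ((n : ℂ) ^ 2) = jacobiTheta₂_term n 0 (2 * τ) := by
  rw [th, jacobiTheta₂_term]; congr 1; ring

lemma th_eq_jt2 (τ : ℂ) (n : ℤ) :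
    th τ (((n : ℂ) + 1 / 2) ^ 2)
      = Complex.exp (Real.pi * Complex.I * τ / 2) * jacobiTheta₂_term n τ (2 * τ) := by
  rw [th, jacobiTheta₂_term, ← Complex.exp_add]; congr 1; ring

lemma summable_norm3 {τ : ℂ} (hτ : 0 < τ.im) :
    Summable fun n : ℤ => ‖th τ ((n : ℂ) ^ 2)‖ := by
  simp_rw [th_eq_jt3]; exact summable_norm_jt 0 (im_two_mul hτ)

lemma summable_norm2 {τ : ℂ} (hτ : 0 < τ.im) :
    Summable fun n : ℤ => ‖th τ (((n : ℂ) + 1 / 2) ^ 2)‖ := by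
  simp_rw [th_eq_jt2, norm_mul]
  exact (summable_norm_jt τ (im_two_mul hτ)).mul_left _

lemma summable_norm0 {τ : ℂ} (hτ : 0 < τ.im) :
    Summable fun n : ℤ => ‖(-1 : ℂ) ^ n * th τ ((n : ℂ) ^ 2)‖ := by
  refine (summable_norm3 hτ).congr fun n => ?_
  rw [norm_mul]; simp

-- the two injections
def iE (c : ℤ × ℤ) : ℤ × ℤ := (c.1 + c.2, c.1 - c.2)
def iO (c : ℤ × ℤ) : ℤ × ℤ := (c.1 + c.2 + 1, c.1 - c.2)
def iC1 (c : ℤ × ℤ) : ℤ × ℤ := (c.1 + c.2, c.1 - c.2)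
def iC2 (c : ℤ × ℤ) : ℤ × ℤ := (c.1 + c.2, c.1 - c.2 - 1)

lemma iE_inj : Function.Injective iE := by
  intro a b h; rw [iE, iE, Prod.ext_iff] at h; simp only at h
  ext <;> omega

lemma iO_inj : Function.Injective iO := by
  intro a b h; rw [iO, iO, Prod.ext_iff] at h; simp only at h
  ext <;> omega

lemma iC2_inj : Function.Injective iC2 := by
  intro a b h; rw [iC2, iC2, Prod.ext_iff] at h; simp only at h
  ext <;> omega

-- Identity A : sum over even m+n
lemma sumA {τ : ℂ} (hτ : 0 < τ.im) :
    ∑' p : ℤ × ℤ, (th τ ((p.1 : ℂ) ^ 2 + (p.2 : ℂ) ^ 2)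
        + (-1) ^ (p.1 + p.2) * th τ ((p.1 : ℂ) ^ 2 + (p.2 : ℂ) ^ 2))
      = 2 * theta3 (2 * τ) ^ 2 := by
  set G : ℤ × ℤ → ℂ := fun p => th τ ((p.1 : ℂ) ^ 2 + (p.2 : ℂ) ^ 2)
      + (-1) ^ (p.1 + p.2) * th τ ((p.1 : ℂ) ^ 2 + (p.2 : ℂ) ^ 2) with hG
  have hsupp : Function.support G ⊆ Set.range iE := by
    intro p hp
    rcases Int.even_or_odd (p.1 + p.2) with he | ho
    · obtain ⟨k, hk⟩ := he
      exact ⟨(k, k - p.2), by rw [iE]; ext <;> simp <;> omega⟩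
    · exfalso; apply hp
      simp only [hG, Odd.neg_one_zpow ho]; ring
  rw [← iE_inj.tsum_eq hsupp]
  have hterm : ∀ c : ℤ × ℤ,
      G (iE c) = 2 * (th (2 * τ) ((c.1 : ℂ) ^ 2) * th (2 * τ) ((c.2 : ℂ) ^ 2)) := by
    intro c
    have hev : Even ((c.1 + c.2) + (c.1 - c.2)) := ⟨c.1, by ring⟩
    simp only [hG, iE, Even.neg_one_zpow hev, one_mul, ← two_mul]
    congr 1
    rw [← th_two, ← th_two, th_mul]
    congr 1
    push_cast; ring
  rw [tsum_congr hterm, tsum_mul_left]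
  congr 1
  rw [sq, theta3_eq,
    tsum_mul_tsum_of_summable_norm (summable_norm3 (im_two_mul hτ)) (summable_norm3 (im_two_mul hτ))]

-- Identity B : sum over odd m+n
lemma sumB {τ : ℂ} (hτ : 0 < τ.im) :
    ∑' p : ℤ × ℤ, (th τ ((p.1 : ℂ) ^ 2 + (p.2 : ℂ) ^ 2)
        - (-1) ^ (p.1 + p.2) * th τ ((p.1 : ℂ) ^ 2 + (p.2 : ℂ) ^ 2))
      = 2 * theta2 (2 * τ) ^ 2 := by
  set G : ℤ × ℤ → ℂ := fun p => th τ ((p.1 : ℂ) ^ 2 + (p.2 : ℂ) ^ 2)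
      - (-1) ^ (p.1 + p.2) * th τ ((p.1 : ℂ) ^ 2 + (p.2 : ℂ) ^ 2) with hG
  have hsupp : Function.support G ⊆ Set.range iO := by
    intro p hp
    rcases Int.even_or_odd (p.1 + p.2) with he | ho
    · exfalso; apply hp
      simp only [hG, Even.neg_one_zpow he]; ring
    · obtain ⟨k, hk⟩ := ho
      exact ⟨(k, k - p.2), by rw [iO]; ext <;> simp <;> omega⟩
  rw [← iO_inj.tsum_eq hsupp]
  have hterm : ∀ c : ℤ × ℤ,
      G (iO c) = 2 * (th (2 * τ) (((c.1 : ℂ) + 1 / 2) ^ 2) * th (2 * τ) (((c.2 : ℂ) + 1 / 2) ^ 2)) := by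
    intro c
    have hod : Odd ((c.1 + c.2 + 1) + (c.1 - c.2)) := ⟨c.1, by ring⟩
    simp only [hG, iO, Odd.neg_one_zpow hod, neg_one_mul, sub_neg_eq_add, ← two_mul]
    congr 1
    rw [← th_two, ← th_two, th_mul]
    congr 1
    push_cast; ring
  rw [tsum_congr hterm, tsum_mul_left]
  congr 1
  rw [sq, theta2_eq,
    tsum_mul_tsum_of_summable_norm (summable_norm2 (im_two_mul hτ)) (summable_norm2 (im_two_mul hτ))]

-- Identity C, part 1 : sum over even m-n
lemma sumC1 {τ : ℂ} (hτ : 0 < τ.im) :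
    ∑' p : ℤ × ℤ, (th τ (((p.1 : ℂ) + 1 / 2) ^ 2 + ((p.2 : ℂ) + 1 / 2) ^ 2)
        + (-1) ^ (p.1 - p.2) * th τ (((p.1 : ℂ) + 1 / 2) ^ 2 + ((p.2 : ℂ) + 1 / 2) ^ 2))
      = 2 * (theta2 (2 * τ) * theta3 (2 * τ)) := by
  set G : ℤ × ℤ → ℂ := fun p => th τ (((p.1 : ℂ) + 1 / 2) ^ 2 + ((p.2 : ℂ) + 1 / 2) ^ 2)
      + (-1) ^ (p.1 - p.2) * th τ (((p.1 : ℂ) + 1 / 2) ^ 2 + ((p.2 : ℂ) + 1 / 2) ^ 2) with hG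
  have hsupp : Function.support G ⊆ Set.range iE := by
    intro p hp
    rcases Int.even_or_odd (p.1 - p.2) with he | ho
    · obtain ⟨k, hk⟩ := he
      exact ⟨(p.2 + k, k), by rw [iE]; ext <;> simp <;> omega⟩
    · exfalso; apply hp
      simp only [hG, Odd.neg_one_zpow ho]; ring
  rw [← iE_inj.tsum_eq hsupp]
  have hterm : ∀ c : ℤ × ℤ,
      G (iE c) = 2 * (th (2 * τ) (((c.1 : ℂ) + 1 / 2) ^ 2) * th (2 * τ) ((c.2 : ℂ) ^ 2)) := by
    intro c
    have hev : Even ((c.1 + c.2) - (c.1 - c.2)) := ⟨c.2, by ring⟩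
    simp only [hG, iE, Even.neg_one_zpow hev, one_mul, ← two_mul]
    congr 1
    rw [← th_two, ← th_two, th_mul]
    congr 1
    push_cast; ring
  rw [tsum_congr hterm, tsum_mul_left]
  congr 1
  rw [theta2_eq, theta3_eq,
    tsum_mul_tsum_of_summable_norm (summable_norm2 (im_two_mul hτ)) (summable_norm3 (im_two_mul hτ))]

-- Identity C, part 2 : sum over odd m-n
lemma sumC2 {τ : ℂ} (hτ : 0 < τ.im) :
    ∑' p : ℤ × ℤ, (th τ (((p.1 : ℂ) + 1 / 2) ^ 2 + ((p.2 : ℂ) + 1 / 2) ^ 2)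
        - (-1) ^ (p.1 - p.2) * th τ (((p.1 : ℂ) + 1 / 2) ^ 2 + ((p.2 : ℂ) + 1 / 2) ^ 2))
      = 2 * (theta3 (2 * τ) * theta2 (2 * τ)) := by
  set G : ℤ × ℤ → ℂ := fun p => th τ (((p.1 : ℂ) + 1 / 2) ^ 2 + ((p.2 : ℂ) + 1 / 2) ^ 2)
      - (-1) ^ (p.1 - p.2) * th τ (((p.1 : ℂ) + 1 / 2) ^ 2 + ((p.2 : ℂ) + 1 / 2) ^ 2) with hG
  have hsupp : Function.support G ⊆ Set.range iC2 := by
    intro p hp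
    rcases Int.even_or_odd (p.1 - p.2) with he | ho
    · exfalso; apply hp
      simp only [hG, Even.neg_one_zpow he]; ring
    · obtain ⟨k, hk⟩ := ho
      exact ⟨(p.2 + k + 1, k), by rw [iC2]; ext <;> simp <;> omega⟩
  rw [← iC2_inj.tsum_eq hsupp]
  have hterm : ∀ c : ℤ × ℤ,
      G (iC2 c) = 2 * (th (2 * τ) ((c.1 : ℂ) ^ 2) * th (2 * τ) (((c.2 : ℂ) + 1 / 2) ^ 2)) := by
    intro c
    have hod : Odd ((c.1 + c.2) - (c.1 - c.2 - 1)) := ⟨c.2, by ring⟩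
    simp only [hG, iC2, Odd.neg_one_zpow hod, neg_one_mul, sub_neg_eq_add, ← two_mul]
    congr 1
    rw [← th_two, ← th_two, th_mul]
    congr 1
    push_cast; ring
  rw [tsum_congr hterm, tsum_mul_left]
  congr 1
  rw [theta3_eq, theta2_eq,
    tsum_mul_tsum_of_summable_norm (summable_norm3 (im_two_mul hτ)) (summable_norm2 (im_two_mul hτ))]

lemma neg_one_ne : (-1 : ℂ) ≠ 0 := by norm_num

lemma s3' {τ : ℂ} (hτ : 0 < τ.im) :
    Summable fun p : ℤ × ℤ => th τ ((p.1 : ℂ) ^ 2 + (p.2 : ℂ) ^ 2) :=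
  (((summable_norm3 hτ).mul_norm (summable_norm3 hτ)).of_norm).congr fun p => th_mul ..

lemma s0' {τ : ℂ} (hτ : 0 < τ.im) :
    Summable fun p : ℤ × ℤ => (-1 : ℂ) ^ (p.1 + p.2) * th τ ((p.1 : ℂ) ^ 2 + (p.2 : ℂ) ^ 2) :=
  (((summable_norm0 hτ).mul_norm (summable_norm0 hτ)).of_norm).congr fun p => by
    rw [mul_mul_mul_comm, th_mul, ← zpow_add₀ neg_one_ne]

lemma s2' {τ : ℂ} (hτ : 0 < τ.im) :
    Summable fun p : ℤ × ℤ => th τ (((p.1 : ℂ) + 1 / 2) ^ 2 + ((p.2 : ℂ) + 1 / 2) ^ 2) :=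
  (((summable_norm2 hτ).mul_norm (summable_norm2 hτ)).of_norm).congr fun p => th_mul ..

lemma s2s' {τ : ℂ} (hτ : 0 < τ.im) :
    Summable fun p : ℤ × ℤ =>
      (-1 : ℂ) ^ (p.1 - p.2) * th τ (((p.1 : ℂ) + 1 / 2) ^ 2 + ((p.2 : ℂ) + 1 / 2) ^ 2) := by
  refine Summable.of_norm (((s2' hτ).norm).congr fun p => ?_)
  rw [norm_mul, norm_zpow, norm_neg, norm_one, one_zpow, one_mul]

lemma quadA {τ : ℂ} (hτ : 0 < τ.im) :
    theta3 τ ^ 2 + theta0 τ ^ 2 = 2 * theta3 (2 * τ) ^ 2 := by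
  have e3 : theta3 τ ^ 2 = ∑' p : ℤ × ℤ, th τ ((p.1 : ℂ) ^ 2 + (p.2 : ℂ) ^ 2) := by
    rw [sq, theta3_eq,
      tsum_mul_tsum_of_summable_norm (summable_norm3 hτ) (summable_norm3 hτ)]
    exact tsum_congr fun p => th_mul ..
  have e0 : theta0 τ ^ 2
      = ∑' p : ℤ × ℤ, (-1 : ℂ) ^ (p.1 + p.2) * th τ ((p.1 : ℂ) ^ 2 + (p.2 : ℂ) ^ 2) := by
    rw [sq, theta0_eq,
      tsum_mul_tsum_of_summable_norm (summable_norm0 hτ) (summable_norm0 hτ)]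
    exact tsum_congr fun p => by rw [mul_mul_mul_comm, th_mul, ← zpow_add₀ neg_one_ne]
  rw [e3, e0, ← Summable.tsum_add (s3' hτ) (s0' hτ)]
  exact sumA hτ

lemma quadB {τ : ℂ} (hτ : 0 < τ.im) :
    theta3 τ ^ 2 - theta0 τ ^ 2 = 2 * theta2 (2 * τ) ^ 2 := by
  have e3 : theta3 τ ^ 2 = ∑' p : ℤ × ℤ, th τ ((p.1 : ℂ) ^ 2 + (p.2 : ℂ) ^ 2) := by
    rw [sq, theta3_eq,
      tsum_mul_tsum_of_summable_norm (summable_norm3 hτ) (summable_norm3 hτ)]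
    exact tsum_congr fun p => th_mul ..
  have e0 : theta0 τ ^ 2
      = ∑' p : ℤ × ℤ, (-1 : ℂ) ^ (p.1 + p.2) * th τ ((p.1 : ℂ) ^ 2 + (p.2 : ℂ) ^ 2) := by
    rw [sq, theta0_eq,
      tsum_mul_tsum_of_summable_norm (summable_norm0 hτ) (summable_norm0 hτ)]
    exact tsum_congr fun p => by rw [mul_mul_mul_comm, th_mul, ← zpow_add₀ neg_one_ne]
  rw [e3, e0, ← Summable.tsum_sub (s3' hτ) (s0' hτ)]
  exact sumB hτ

lemma quadC {τ : ℂ} (hτ : 0 < τ.im) :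
    theta2 τ ^ 2 = 2 * (theta2 (2 * τ) * theta3 (2 * τ)) := by
  have e2 : theta2 τ ^ 2
      = ∑' p : ℤ × ℤ, th τ (((p.1 : ℂ) + 1 / 2) ^ 2 + ((p.2 : ℂ) + 1 / 2) ^ 2) := by
    rw [sq, theta2_eq,
      tsum_mul_tsum_of_summable_norm (summable_norm2 hτ) (summable_norm2 hτ)]
    exact tsum_congr fun p => th_mul ..
  have key : 2 * theta2 τ ^ 2
      = 2 * (theta2 (2 * τ) * theta3 (2 * τ)) + 2 * (theta3 (2 * τ) * theta2 (2 * τ)) := by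
    rw [← sumC1 hτ, ← sumC2 hτ, Summable.tsum_add (s2' hτ) (s2s' hτ), Summable.tsum_sub (s2' hτ) (s2s' hτ), e2]
    ring
  linear_combination key / 2


/-- the Jacobi quartic identity `θ₃⁴ = θ₂⁴ + θ₀⁴` on the upper half-plane. -/
theorem jacobi_quartic_identity (τ : ℂ) (hτ : 0 < τ.im) :
    theta3 τ ^ 4 = theta2 τ ^ 4 + theta0 τ ^ 4 := by
  have hA := quadA hτ
  have hB := quadB hτ
  have hC := quadC hτ
  linear_combination (theta3 τ ^ 2 - theta0 τ ^ 2) * hA + 2 * theta3 (2 * τ) ^ 2 * hB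
    - (theta2 τ ^ 2 + 2 * theta2 (2 * τ) * theta3 (2 * τ)) * hC
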